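/- Both eigenvalues of the 2×2 matrix σ_0 = [[-1/2, Δt/12], [-1/Δt, 0]] have absolute value exactly 1/(2√3) < 1, independent of Δt > 0. -/

import Mathlib

/-!
The characteristic polynomial of `σ₀` is `μ² + μ/2 + 1/12`: the off-diagonal product
`(Δt/12)·(-1/Δt) = -1/12` does not depend on `Δt`. Its discriminant `1/4 - 1/3` is negative, so the
two eigenvalues are complex conjugate and each has squared modulus equal to their product `1/12`.
-/

open Polynomial in
theorem Matrix.mem_spectrum_fin_two_iff {K : Type*} [Field K] (A : Matrix (Fin 2) (Fin 2) K)
    (μ : K) : μ ∈ spectrum K A ↔ μ ^ 2 - A.trace * μ + A.det = 0 := by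
  rw [mem_spectrum_iff_isRoot_charpoly, charpoly_fin_two]
  simp

theorem Complex.normSq_eq_of_quadratic_eq_zero {b c : ℝ} (hdisc : b ^ 2 < 4 * c) {z : ℂ}
    (hz : z ^ 2 + b * z + c = 0) : Complex.normSq z = c := by
  have hre : z.re ^ 2 - z.im ^ 2 + b * z.re + c = 0 := by
    simpa [sq] using congrArg Complex.re hz
  have him : z.im * (2 * z.re + b) = 0 := by
    have := congrArg Complex.im hz
    simp only [sq, add_im, mul_im, ofReal_re, ofReal_im, zero_mul, add_zero, zero_im] at this
    linear_combination this
  -- a real root would contradict the negative discriminant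
  have him_ne : z.im ≠ 0 := by
    intro h0
    rw [h0] at hre
    nlinarith [sq_nonneg (2 * z.re + b)]
  have hre_eq : 2 * z.re + b = 0 := (mul_eq_zero.mp him).resolve_left him_ne
  rw [Complex.normSq_apply]
  linear_combination -hre + z.re * hre_eq

theorem sqrt_one_div_twelve : Real.sqrt (1 / 12) = 1 / (2 * Real.sqrt 3) := by
  rw [one_div, Real.sqrt_inv, ← one_div, show (12:ℝ) = 2 ^ 2 * 3 by norm_num,
    Real.sqrt_mul (by norm_num), Real.sqrt_sq (by norm_num)]

/-- Both eigenvalues of the `2×2` matrix `σ₀ = [[-1/2, Δt/12], [-1/Δt, 0]]`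
have absolute value exactly `1/(2√3) < 1`, independently of `Δt > 0`. -/
theorem stmt8 (Δt : ℝ) (hΔt : 0 < Δt) :
    (∀ μ ∈ spectrum ℂ (!![(-1/2 : ℂ), (Δt : ℂ)/12; -1/(Δt : ℂ), 0]),
      ‖μ‖ = 1 / (2 * Real.sqrt 3)) ∧
    1 / (2 * Real.sqrt 3) < 1 := by
  have hΔt' : (Δt : ℂ) ≠ 0 := Complex.ofReal_ne_zero.mpr hΔt.ne'
  refine ⟨fun μ hμ => ?_, ?_⟩
  · rw [Matrix.mem_spectrum_fin_two_iff, Matrix.trace_fin_two_of, Matrix.det_fin_two_of] at hμ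
    have hquad : μ ^ 2 + ((1 / 2 : ℝ) : ℂ) * μ + ((1 / 12 : ℝ) : ℂ) = 0 := by
      have hdet : (Δt : ℂ) / 12 * (-1 / Δt) = -1 / 12 := by field_simp
      push_cast
      linear_combination hμ + hdet
    rw [Complex.norm_def, Complex.normSq_eq_of_quadratic_eq_zero (by norm_num) hquad,
      sqrt_one_div_twelve]
  · rw [div_lt_one (by positivity)]
    nlinarith [Real.sq_sqrt (show (0:ℝ) ≤ 3 by norm_num), Real.sqrt_nonneg 3]
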